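/- Let P be the uniform distribution on the boundary L of the unit semicircular disc (the union of the segment L_1 from (-1,0) to (1,0) and the upper unit semicircular arc L_2), with density 1/(2+π) with respect to arc length. For integers n_2 ≥ 2, place the points (cos((j-1)π/(n_2-1)), sin((j-1)π/(n_2-1))) for 1 ≤ j ≤ n_2 on L_2. Then the distortion error contributed by L_2, i.e., (1/(2+π)) ∫_0^π min_j |(cos t, sin t) - (cos θ_j, sin θ_j)|^2 dt with θ_j = (j-1)π/(n_2-1), equals (2/(3(2+π))) (3π - 6(n_2-1) sin(π/(2(n_2-1)))). -/

import Mathlib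

/-! The squared chord between the angles `t` and `θ` is `2 - 2 cos (t - θ)`, which increases
with `|t - θ|` as long as `|t - θ| ≤ π`. Hence for `t ∈ [0, π]` the minimum over the nodes
`j h` (`h = π / m`, `m = n₂ - 1`) is attained at the nearest node. Cutting `[0, π]` at the nodes
and at the midpoints between them gives `2m` half-cells, on each of which the integrand is
`2 - 2 cos u` with `u` running over `[0, h/2]`; each contributes `h - 2 sin (h/2)`, and the
integral is `2π - 4m sin (π / (2m))`. -/

open Real Set intervalIntegral

theorem sq_cos_sub_cos_add_sq_sin_sub_sin (t a : ℝ) :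
    (cos t - cos a) ^ 2 + (sin t - sin a) ^ 2 = 2 - 2 * cos (t - a) := by
  rw [cos_sub]
  linear_combination sin_sq_add_cos_sq t + sin_sq_add_cos_sq a

theorem Continuous.ciInf_of_finite {X ι L : Type*} [TopologicalSpace X] [Fintype ι] [Nonempty ι]
    [ConditionallyCompleteLattice L] [TopologicalSpace L] [ContinuousInf L] {f : ι → X → L}
    (hf : ∀ i, Continuous (f i)) : Continuous fun x ↦ ⨅ i, f i x := by
  simp_rw [← Finset.inf'_univ_eq_ciInf]
  exact Continuous.finset_inf'_apply _ fun i _ ↦ hf i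

theorem ciInf_two_sub_two_cos_sub_eq {ι : Type*} [Finite ι] (θ : ι → ℝ) {t : ℝ} (i₀ : ι)
    (hπ : ∀ j, |t - θ j| ≤ π) (hmin : ∀ j, |t - θ i₀| ≤ |t - θ j|) :
    ⨅ j, (2 - 2 * cos (t - θ j)) = 2 - 2 * cos (t - θ i₀) := by
  have : Nonempty ι := ⟨i₀⟩
  refine le_antisymm (ciInf_le (finite_range _).bddBelow i₀) (le_ciInf fun j ↦ ?_)
  have := cos_le_cos_of_nonneg_of_le_pi (abs_nonneg _) (hπ j) (hmin j)
  rw [cos_abs, cos_abs] at this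
  linarith

theorem abs_sub_mul_le_of_abs_sub_mul_le_half {h t : ℝ} (hh : 0 < h) {s : ℤ}
    (hs : |t - s * h| ≤ h / 2) (j : ℤ) : |t - s * h| ≤ |t - j * h| := by
  rcases eq_or_ne j s with rfl | hjs
  · rfl
  have hone : (1 : ℝ) ≤ |(s : ℝ) - j| := by
    exact_mod_cast Int.one_le_abs (sub_ne_zero.mpr hjs.symm)
  have hgap : h ≤ |(s - j : ℝ) * h| := by
    rw [abs_mul, abs_of_pos hh]; nlinarith
  have htri : |(s - j : ℝ) * h| ≤ |t - s * h| + |t - j * h| := by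
    calc |(s - j : ℝ) * h| = |(t - j * h) - (t - s * h)| := by ring_nf
      _ ≤ |t - j * h| + |t - s * h| := abs_sub _ _
      _ = _ := add_comm _ _
  linarith

theorem integral_two_sub_two_cos_sub (a b c : ℝ) :
    ∫ t in a..b, (2 - 2 * cos (t - c)) = 2 * (b - a) - 2 * (sin (b - c) - sin (a - c)) := by
  rw [integral_sub intervalIntegrable_const
      ((by fun_prop : Continuous fun t ↦ 2 * cos (t - c)).intervalIntegrable _ _),
    integral_const_mul, integral_comp_sub_right (fun t ↦ cos t), integral_cos]
  simp [mul_comm]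

noncomputable def arcQuantError (m : ℕ) (t : ℝ) : ℝ :=
  ⨅ j : Fin (m + 1), (2 - 2 * cos (t - j * (π / m)))

theorem continuous_arcQuantError (m : ℕ) : Continuous (arcQuantError m) :=
  Continuous.ciInf_of_finite fun _ ↦ by fun_prop

theorem arcQuantError_eq {m : ℕ} (hm : 0 < m) {t : ℝ} (ht : t ∈ Icc 0 π) {s : ℕ} (hs : s ≤ m)
    (hts : |t - s * (π / m)| ≤ π / m / 2) : arcQuantError m t = 2 - 2 * cos (t - s * (π / m)) := by
  have hh : 0 < π / m := by positivity
  have hnode : ∀ j : Fin (m + 1), (j : ℝ) * (π / m) ∈ Icc 0 π := fun j ↦ by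
    refine ⟨by positivity, ?_⟩
    calc (j : ℝ) * (π / m) ≤ m * (π / m) := by gcongr; exact_mod_cast j.is_le
      _ = π := by field_simp
  refine ciInf_two_sub_two_cos_sub_eq (fun j : Fin (m + 1) ↦ (j : ℝ) * (π / m))
    ⟨s, Nat.lt_succ_of_le hs⟩ (fun j ↦ ?_) (fun j ↦ ?_)
  · have := hnode j
    rw [abs_le]; constructor <;> linarith [ht.1, ht.2, this.1, this.2]
  · exact_mod_cast abs_sub_mul_le_of_abs_sub_mul_le_half hh (s := s) (by exact_mod_cast hts) j

theorem integral_arcQuantError_cell {m : ℕ} (hm : 0 < m) {k : ℕ} (hk : k < m) :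
    ∫ t in k * (π / m)..(k + 1) * (π / m), arcQuantError m t =
      2 * (π / m) - 4 * sin (π / m / 2) := by
  set h := π / m with h_def
  have hh : 0 < h := by positivity
  have hmh : m * h = π := by rw [h_def]; field_simp
  have hkm : (k + 1 : ℝ) ≤ m := by exact_mod_cast hk
  have hint := (continuous_arcQuantError m).intervalIntegrable (μ := MeasureTheory.volume)
  have hleft : EqOn (arcQuantError m) (fun t ↦ 2 - 2 * cos (t - k * h))
      (uIcc (k * h) (k * h + h / 2)) := fun t ht ↦ by
    rw [uIcc_of_le (by linarith)] at ht
    refine arcQuantError_eq hm ⟨?_, ?_⟩ hk.le (abs_le.2 ⟨?_, ?_⟩) <;> nlinarith [ht.1, ht.2]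
  have hright : EqOn (arcQuantError m) (fun t ↦ 2 - 2 * cos (t - (k + 1) * h))
      (uIcc (k * h + h / 2) ((k + 1) * h)) := fun t ht ↦ by
    rw [uIcc_of_le (by linarith)] at ht
    have := arcQuantError_eq hm (t := t) (s := k + 1) ⟨?_, ?_⟩ hk (abs_le.2 ⟨?_, ?_⟩)
    · simpa using this
    all_goals push_cast; nlinarith [ht.1, ht.2]
  rw [← integral_add_adjacent_intervals (hint _ (k * h + h / 2)) (hint _ _),
    integral_congr hleft, integral_congr hright, integral_two_sub_two_cos_sub,
    integral_two_sub_two_cos_sub]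
  have e₁ : k * h + h / 2 - k * h = h / 2 := by ring
  have e₂ : k * h + h / 2 - (k + 1) * h = -(h / 2) := by ring
  simp only [e₁, e₂, sub_self, sin_zero, sin_neg]
  ring

theorem integral_arcQuantError {m : ℕ} (hm : 0 < m) :
    ∫ t in (0 : ℝ)..π, arcQuantError m t = 2 * π - 4 * m * sin (π / (2 * m)) := by
  have hsum := sum_integral_adjacent_intervals (a := fun k : ℕ ↦ k * (π / m)) (n := m)
    fun _ _ ↦ (continuous_arcQuantError m).intervalIntegrable (μ := MeasureTheory.volume) _ _
  have hmπ : (m : ℝ) * (π / m) = π := by field_simp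
  simp only [Nat.cast_zero, zero_mul, hmπ, Nat.cast_succ] at hsum
  rw [← hsum,
    Finset.sum_congr rfl fun k hk ↦ integral_arcQuantError_cell hm (Finset.mem_range.1 hk),
    Finset.sum_const, Finset.card_range, nsmul_eq_mul, div_div]
  field_simp

theorem stmt4 (n₂ : ℕ) (hn₂ : 2 ≤ n₂) :
    (1 / (2 + π)) * ∫ t in (0:ℝ)..π,
        ⨅ j : Fin n₂,
          ((Real.cos t - Real.cos ((j : ℝ) * π / ((n₂ : ℝ) - 1)))^2 +
           (Real.sin t - Real.sin ((j : ℝ) * π / ((n₂ : ℝ) - 1)))^2)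
      = (2 / (3 * (2 + π))) * (3 * π - 6 * ((n₂ : ℝ) - 1) * Real.sin (π / (2 * ((n₂ : ℝ) - 1)))) := by
  obtain ⟨m, rfl⟩ : ∃ m, n₂ = m + 1 := ⟨n₂ - 1, by omega⟩
  have hcast : ((m + 1 : ℕ) : ℝ) - 1 = m := by push_cast; ring
  simp only [hcast, sq_cos_sub_cos_add_sq_sin_sub_sin, mul_div_assoc]
  change 1 / (2 + π) * ∫ t in (0 : ℝ)..π, arcQuantError m t = _
  rw [integral_arcQuantError (by omega)]
  field_simp
  ring
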